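/- Let k be a field, G a group, K ≤ G a subgroup, and S ⊆ G a set of double coset representatives, i.e. G is the disjoint union of the double cosets KsK for s ∈ S. Let W be a k-linear representation of K. For s ∈ S let K^s = K ∩ s⁻¹Ks act on W by κ ∗_s w = (sκs⁻¹)·w, and write W^s for the resulting representation of K^s. Then the map f ↦ (f_s)_{s∈S}, where f_s(κ) = f(sκ) for κ ∈ K, is a K-equivariant k-linear isomorphism I_K^G W ≅ ∏_{s∈S} I_{K^s}^K W^s, where K acts on the source and on each factor of the target by right translation. -/

import Mathlib

/-!
Every `g ∈ G` is `a * s * b` with `a, b ∈ K` and a unique `s ∈ S`. On `K s K` a function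
`f ∈ I_K^G W` is determined by `f_s(b) = f(s b)` through `f(a s b) = a • f_s(b)`. Conversely a
family `(h_s)` glues to `a s b ↦ a • h_s(b)`; this is well defined because two decompositions
`a s b = a' s b'` differ by `b' b⁻¹ ∈ K^s`, whose action on `W^s` is that of `a'⁻¹ a`.
-/

noncomputable section

universe u

variable {k : Type u} [Field k] {G : Type u} [Group G]

/-- The full induction `I_K^G W`: all functions `f : G → W` with `f (κ g) = κ • f g`,
with `G` acting by right translation. -/
def IndFull (k : Type u) [Field k] {G : Type u} [Group G] (K : Subgroup G)
    {W : Type u} [AddCommGroup W] [Module k W] (ρ : Representation k ↥K W) :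
    Submodule k (G → W) where
  carrier := {f | ∀ (κ : ↥K) (g : G), f ((κ : G) * g) = ρ κ (f g)}
  add_mem' := by
    intro f g hf hg κ x
    simp [hf κ x, hg κ x]
  zero_mem' := by intro κ x; simp
  smul_mem' := by
    intro c f hf κ x
    simp [hf κ x]

/-- `K^s = K ∩ s⁻¹Ks`. -/
def Kconj (K : Subgroup G) (s : G) : Subgroup G :=
  K ⊓ K.map (MulAut.conj s⁻¹).toMonoidHom

/-- The homomorphism `K^s → K`, `κ ↦ sκs⁻¹` (through which `K^s` acts on `W^s`). -/
def conjIntoK (K : Subgroup G) (s : G) : ↥((Kconj K s).subgroupOf K) →* ↥K where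
  toFun κ :=
    ⟨s * ((κ : ↥K) : G) * s⁻¹, by
      have h2 : ((κ : ↥K) : G) ∈ K.map (MulAut.conj s⁻¹).toMonoidHom :=
        (Subgroup.mem_subgroupOf.mp κ.2).2
      obtain ⟨x, hxK, hx⟩ := h2
      have hxe : s * ((κ : ↥K) : G) * s⁻¹ = x := by
        rw [← hx]
        simp only [MulEquiv.coe_toMonoidHom, MulAut.conj_apply]
        group
      rw [hxe]; exact hxK⟩
  map_one' := by
    ext
    simp
  map_mul' κ₁ κ₂ := by
    ext
    show s * (((κ₁ * κ₂ : _) : ↥K) : G) * s⁻¹ = (s * _ * s⁻¹) * (s * _ * s⁻¹)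
    push_cast
    group

/-- `W^s`: the representation of `K^s ≤ K` on `W` given by `κ ∗ w = (sκs⁻¹) • w`. -/
def repConj (K : Subgroup G) (s : G) {W : Type u} [AddCommGroup W] [Module k W]
    (ρ : Representation k ↥K W) : Representation k ↥((Kconj K s).subgroupOf K) W :=
  ρ.comp (conjIntoK K s)

theorem mem_Kconj_iff {K : Subgroup G} {s x : G} :
    x ∈ Kconj K s ↔ x ∈ K ∧ s * x * s⁻¹ ∈ K := by
  refine Subgroup.mem_inf.trans (and_congr_right fun _ => ?_)
  rw [Subgroup.mem_map_equiv, MulAut.conj_symm_apply, inv_inv]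

@[simp]
theorem coe_conjIntoK (K : Subgroup G) (s : G) (κ : ↥((Kconj K s).subgroupOf K)) :
    ((conjIntoK K s κ : ↥K) : G) = s * ((κ : ↥K) : G) * s⁻¹ :=
  rfl

namespace IndFull

variable {K : Subgroup G} {W : Type u} [AddCommGroup W] [Module k W]
  {ρ : Representation k ↥K W}

theorem comp_mul_right_mem {f : G → W} (hf : f ∈ IndFull k K ρ) (g : G) :
    (fun x => f (x * g)) ∈ IndFull k K ρ := fun κ x => by
  simpa only [mul_assoc] using hf κ (x * g)

theorem restrict_mem {f : G → W} (hf : f ∈ IndFull k K ρ) (s : G) :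
    (fun κ : ↥K => f (s * κ)) ∈ IndFull k ((Kconj K s).subgroupOf K) (repConj K s ρ) :=
  fun κ b => by
    have hmove : s * ((κ : ↥K) * b : ↥K) = (conjIntoK K s κ : G) * (s * b) := by
      simp only [coe_conjIntoK, Subgroup.coe_mul]
      group
    change f (s * ((κ : ↥K) * b : ↥K)) = ρ (conjIntoK K s κ) (f (s * b))
    rw [hmove]
    exact hf _ _

/-- The transformation law of `I_{K^s}^K W^s` at the element `s⁻¹ c s ∈ K^s`, given through
`c ∈ K`. -/
theorem apply_eq_of_mul_eq {s : G} {h : ↥K → W}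
    (hh : h ∈ IndFull k ((Kconj K s).subgroupOf K) (repConj K s ρ)) {b b' c : ↥K}
    (hbc : s * (b' : G) = c * (s * b)) : h b' = ρ c (h b) := by
  have hconj : s * ((b' * b⁻¹ : ↥K) : G) * s⁻¹ = c := by
    simp only [Subgroup.coe_mul, Subgroup.coe_inv, ← mul_assoc, hbc]
    group
  let κ : ↥((Kconj K s).subgroupOf K) :=
    ⟨b' * b⁻¹, Subgroup.mem_subgroupOf.mpr (mem_Kconj_iff.mpr ⟨(b' * b⁻¹).2, hconj ▸ c.2⟩)⟩
  have hκ : conjIntoK K s κ = c := Subtype.ext hconj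
  have hb' : (κ : ↥K) * b = b' := inv_mul_cancel_right b' b
  rw [← hb', hh κ b]
  change ρ (conjIntoK K s κ) _ = _
  rw [hκ]

theorem apply_eq_of_mul_mul_eq {s : G} {h : ↥K → W}
    (hh : h ∈ IndFull k ((Kconj K s).subgroupOf K) (repConj K s ρ)) {a b a' b' : ↥K}
    (heq : (a : G) * s * b = a' * s * b') : ρ a (h b) = ρ a' (h b') := by
  have hbc : s * (b' : G) = (a'⁻¹ * a : ↥K) * (s * b) :=
    calc s * (b' : G) = (a' : G)⁻¹ * (a' * s * b') := by group
      _ = (a' : G)⁻¹ * (a * s * b) := by rw [heq]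
      _ = (a'⁻¹ * a : ↥K) * (s * b) := by push_cast; group
  rw [apply_eq_of_mul_eq hh hbc, ← Module.End.mul_apply, ← map_mul, mul_inv_cancel_left]

end IndFull

section DoubleCosets

variable (K : Subgroup G) (S : Set G)
  {W : Type u} [AddCommGroup W] [Module k W] (ρ : Representation k ↥K W)

def restrictToDoubleCosets :
    ↥(IndFull k K ρ) →ₗ[k]
      ∀ s : S, ↥(IndFull k ((Kconj K (s : G)).subgroupOf K) (repConj K (s : G) ρ)) where
  toFun f s := ⟨fun κ => f.1 ((s : G) * κ), IndFull.restrict_mem f.2 s⟩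
  map_add' _ _ := rfl
  map_smul' _ _ := rfl

variable {K S}

theorem exists_doubleCoset_decomp (hS : ∀ g : G, ∃ s ∈ S, ∃ a ∈ K, ∃ b ∈ K, g = a * s * b)
    (g : G) : ∃ x : S × K × K, g = x.2.1 * x.1 * x.2.2 := by
  obtain ⟨s, hs, a, ha, b, hb, rfl⟩ := hS g
  exact ⟨(⟨s, hs⟩, ⟨a, ha⟩, ⟨b, hb⟩), rfl⟩

def doubleCosetDecomp (hS : ∀ g : G, ∃ s ∈ S, ∃ a ∈ K, ∃ b ∈ K, g = a * s * b) (g : G) :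
    S × K × K :=
  (exists_doubleCoset_decomp hS g).choose

theorem eq_doubleCosetDecomp (hS : ∀ g : G, ∃ s ∈ S, ∃ a ∈ K, ∃ b ∈ K, g = a * s * b)
    (g : G) :
    g = (doubleCosetDecomp hS g).2.1 * (doubleCosetDecomp hS g).1 *
      (doubleCosetDecomp hS g).2.2 :=
  (exists_doubleCoset_decomp hS g).choose_spec

theorem doubleCosetDecomp_fst (hS : ∀ g : G, ∃! s : G, s ∈ S ∧ ∃ a ∈ K, ∃ b ∈ K, g = a * s * b)
    {g : G} {s : S} {a b : ↥K} (hg : g = a * s * b) :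
    (doubleCosetDecomp (fun g => (hS g).exists) g).1 = s :=
  Subtype.ext <| (hS g).unique
    ⟨Subtype.mem _, _, Subtype.mem _, _, Subtype.mem _, eq_doubleCosetDecomp _ g⟩
    ⟨s.2, a, a.2, b, b.2, hg⟩

def glueDoubleCosets (hS : ∀ g : G, ∃ s ∈ S, ∃ a ∈ K, ∃ b ∈ K, g = a * s * b)
    (h : ∀ s : S, ↥(IndFull k ((Kconj K (s : G)).subgroupOf K) (repConj K (s : G) ρ)))
    (g : G) : W :=
  ρ (doubleCosetDecomp hS g).2.1 ((h (doubleCosetDecomp hS g).1).1 (doubleCosetDecomp hS g).2.2)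

variable {ρ}

theorem glueDoubleCosets_eq
    (hS : ∀ g : G, ∃! s : G, s ∈ S ∧ ∃ a ∈ K, ∃ b ∈ K, g = a * s * b)
    (h : ∀ s : S, ↥(IndFull k ((Kconj K (s : G)).subgroupOf K) (repConj K (s : G) ρ)))
    {g : G} {s : S} {a b : ↥K} (hg : g = a * s * b) :
    glueDoubleCosets ρ (fun g => (hS g).exists) h g = ρ a ((h s).1 b) := by
  have hfst := doubleCosetDecomp_fst hS hg
  have hdecomp := eq_doubleCosetDecomp (fun g => (hS g).exists) g
  unfold glueDoubleCosets
  generalize doubleCosetDecomp (fun g => (hS g).exists) g = x at hfst hdecomp ⊢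
  obtain ⟨s', a', b'⟩ := x
  subst hfst
  exact IndFull.apply_eq_of_mul_mul_eq (h s').2 (hdecomp.symm.trans hg)

theorem glueDoubleCosets_mem
    (hS : ∀ g : G, ∃! s : G, s ∈ S ∧ ∃ a ∈ K, ∃ b ∈ K, g = a * s * b)
    (h : ∀ s : S, ↥(IndFull k ((Kconj K (s : G)).subgroupOf K) (repConj K (s : G) ρ))) :
    glueDoubleCosets ρ (fun g => (hS g).exists) h ∈ IndFull k K ρ := by
  intro κ g
  obtain ⟨⟨s, a, b⟩, hg⟩ := exists_doubleCoset_decomp (fun g => (hS g).exists) g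
  have hκg : (κ : G) * g = (κ * a : ↥K) * s * b := by
    rw [hg, Subgroup.coe_mul, mul_assoc (κ : G), mul_assoc (κ : G)]
  rw [glueDoubleCosets_eq hS h hκg, glueDoubleCosets_eq hS h hg, map_mul, Module.End.mul_apply]

theorem glueDoubleCosets_restrictToDoubleCosets
    (hS : ∀ g : G, ∃! s : G, s ∈ S ∧ ∃ a ∈ K, ∃ b ∈ K, g = a * s * b) (f : ↥(IndFull k K ρ)) :
    glueDoubleCosets ρ (fun g => (hS g).exists) (restrictToDoubleCosets K S ρ f) = f := by
  funext g
  obtain ⟨⟨s, a, b⟩, hg⟩ := exists_doubleCoset_decomp (fun g => (hS g).exists) g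
  rw [glueDoubleCosets_eq hS _ hg, hg, mul_assoc]
  exact (f.2 a _).symm

theorem restrictToDoubleCosets_glueDoubleCosets
    (hS : ∀ g : G, ∃! s : G, s ∈ S ∧ ∃ a ∈ K, ∃ b ∈ K, g = a * s * b)
    (h : ∀ s : S, ↥(IndFull k ((Kconj K (s : G)).subgroupOf K) (repConj K (s : G) ρ)))
    (s : S) (κ : ↥K) :
    glueDoubleCosets ρ (fun g => (hS g).exists) h (s * κ) = (h s).1 κ := by
  have hg : (s : G) * κ = (1 : ↥K) * s * κ := by rw [OneMemClass.coe_one, one_mul]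
  rw [glueDoubleCosets_eq hS h hg, map_one, Module.End.one_apply]

variable (ρ)

def doubleCosetEquiv (hS : ∀ g : G, ∃! s : G, s ∈ S ∧ ∃ a ∈ K, ∃ b ∈ K, g = a * s * b) :
    ↥(IndFull k K ρ) ≃ₗ[k]
      ∀ s : S, ↥(IndFull k ((Kconj K (s : G)).subgroupOf K) (repConj K (s : G) ρ)) :=
  { restrictToDoubleCosets K S ρ with
    invFun h := ⟨glueDoubleCosets ρ _ h, glueDoubleCosets_mem hS h⟩
    left_inv f := Subtype.ext (glueDoubleCosets_restrictToDoubleCosets hS f)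
    right_inv h := funext fun s => Subtype.ext <| funext <|
      restrictToDoubleCosets_glueDoubleCosets hS h s }

end DoubleCosets

/-- Let `S ⊆ G` be a set of representatives for the double cosets `K\G/K`
(each `g ∈ G` lies in `KsK` for a unique `s ∈ S`), and `W` a `k`-linear representation of
`K`.  Then `f ↦ (f_s)_{s ∈ S}`, `f_s(κ) = f(sκ)`, is a `K`-equivariant `k`-linear
isomorphism `I_K^G W ≅ ∏_{s ∈ S} I_{K^s}^K W^s`, where `K` acts everywhere by right
translation.  We state: the two closure properties making the right-translation action of
`K` on source and target well defined, and the existence of a linear equivalence `Φ` given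
by the formula `(Φ f) s κ = f (s κ)` (which is then automatically `K`-equivariant, as
recorded in the last clause). -/
theorem stmt1 (K : Subgroup G) (S : Set G)
    (hS : ∀ g : G, ∃! s : G, s ∈ S ∧ ∃ a ∈ K, ∃ b ∈ K, g = a * s * b)
    (W : Type u) [AddCommGroup W] [Module k W] (ρ : Representation k ↥K W) :
    (∀ (κ₀ : ↥K) (f : G → W), f ∈ IndFull k K ρ →
      (fun x => f (x * (κ₀ : G))) ∈ IndFull k K ρ) ∧
    (∀ (s : S) (κ₀ : ↥K) (h : ↥K → W),
      h ∈ IndFull k ((Kconj K (s : G)).subgroupOf K) (repConj K (s : G) ρ) →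
      (fun κ => h (κ * κ₀)) ∈ IndFull k ((Kconj K (s : G)).subgroupOf K)
        (repConj K (s : G) ρ)) ∧
    ∃ Φ : ↥(IndFull k K ρ) ≃ₗ[k]
        (∀ s : S, ↥(IndFull k ((Kconj K (s : G)).subgroupOf K) (repConj K (s : G) ρ))),
      (∀ (f : ↥(IndFull k K ρ)) (s : S) (κ : ↥K),
        ((Φ f) s).1 κ = f.1 ((s : G) * (κ : G))) ∧
      (∀ (κ₀ : ↥K) (f : ↥(IndFull k K ρ))
        (h : (fun x => f.1 (x * (κ₀ : G))) ∈ IndFull k K ρ) (s : S) (κ : ↥K),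
        ((Φ ⟨fun x => f.1 (x * (κ₀ : G)), h⟩) s).1 κ = ((Φ f) s).1 (κ * κ₀)) := by
  refine ⟨fun κ₀ _ hf => IndFull.comp_mul_right_mem hf κ₀,
    fun _ κ₀ _ hh => IndFull.comp_mul_right_mem hh κ₀,
    doubleCosetEquiv ρ hS, fun _ _ _ => rfl, fun κ₀ f _ s κ => ?_⟩
  change f.1 (s * κ * κ₀) = f.1 (s * (κ * κ₀ : ↥K))
  rw [Subgroup.coe_mul, mul_assoc]
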